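/- Any good configuration of a φ-type p has size at most ID(φ), the independence dimension of φ. That is, if C = {c_{i,t} : i < K, t < 2} is a good configuration of p, then K ≤ n = ID(φ). -/

import Mathlib

open FirstOrder

universe u u' v w

namespace IET

/-- Bundled models of the complete theory of `M` (elementary-extension candidates). -/
abbrev MT (L : FirstOrder.Language.{v, w}) (M : Type u) [L.Structure M] :=
  Language.Theory.ModelType.{v, w, max u v w} (L.completeTheory M)

variable (L : FirstOrder.Language.{v, w}) (M : Type u) [L.Structure M]

/-- Consistency of a set of signed `φ`-instances with parameters in `M`:
simultaneous realization in some elementary extension of `M`. -/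
def Consistent (φ : L.Formula (Fin 2)) (X : Set (M × Bool)) : Prop :=
  ∃ (N : MT L M) (f : M ↪ₑ[L] N) (a : N),
    ∀ q ∈ X, (φ.Realize ![a, f q.1] ↔ q.2 = true)

/-- The set of signed instances `{φ(x;b)^(s b) : b ∈ B}`. -/
def typeSet (B : Set M) (s : M → Bool) : Set (M × Bool) :=
  {q | q.1 ∈ B ∧ s q.1 = q.2}

/-- `s` determines a (complete, consistent) φ-type over `B`. -/
def IsPhiType (φ : L.Formula (Fin 2)) (B : Set M) (s : M → Bool) : Prop :=
  Consistent L M φ (typeSet M B s)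

/-- `B` is φ-independent: every sign pattern over `B` is consistent. -/
def PhiIndep (φ : L.Formula (Fin 2)) (B : Set M) : Prop :=
  ∀ s : M → Bool, Consistent L M φ (typeSet M B s)

/-- The space `S_φ(B)` of complete φ-types over `B`. -/
def Sphi (φ : L.Formula (Fin 2)) (B : Set M) : Set (B → Bool) :=
  {s | Consistent L M φ {q | ∃ h : q.1 ∈ B, s ⟨q.1, h⟩ = q.2}}

/-- The set of signed instances `X₀` entails the set `X` (in every elementary
extension of `M`). -/
def EntailsIn (φ : L.Formula (Fin 2)) (X₀ X : Set (M × Bool)) : Prop :=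
  ∀ (N : MT L M) (f : M ↪ₑ[L] N) (a : N),
    (∀ q ∈ X₀, (φ.Realize ![a, f q.1] ↔ q.2 = true)) →
    ∀ q ∈ X, (φ.Realize ![a, f q.1] ↔ q.2 = true)

/-- A φ-type (given as a set of signed instances) is φ-isolated if some finite
subtype entails it. -/
def PhiIsolated (φ : L.Formula (Fin 2)) (X : Set (M × Bool)) : Prop :=
  ∃ X₀ ⊆ X, X₀.Finite ∧ EntailsIn L M φ X₀ X

/-- `φ` has independence dimension `n`: some φ-independent set of size `n` exists
in an elementary extension of `M`, and every φ-independent set in any elementary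
extension of `M` is finite of size at most `n`. -/
def HasID (φ : L.Formula (Fin 2)) (n : ℕ) : Prop :=
  (∃ (N : MT L M) (_ : M ↪ₑ[L] N) (B : Set N),
      B.Finite ∧ B.ncard = n ∧ PhiIndep L N φ B) ∧
    ∀ (N : MT L M) (_ : M ↪ₑ[L] N) (B : Set N),
      PhiIndep L N φ B → B.Finite ∧ B.ncard ≤ n

/-- `b` realizes the partial type `Θ(y)` over `∅`. -/
def RealizesTheta (Θ : Set (L.Formula Unit)) (b : M) : Prop :=
  ∀ θ ∈ Θ, θ.Realize (fun _ : Unit => b)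

/-- Truth of the Δ-instance `∃x (φ(x;c)^t ∧ ⋀_i φ(x; z i)^(s i))`. -/
def DeltaHolds (φ : L.Formula (Fin 2)) {n : ℕ} (t : Bool) (s : Fin n → Bool)
    (z : Fin n → M) (c : M) : Prop :=
  ∃ a : M, (φ.Realize ![a, c] ↔ t = true) ∧ ∀ i, (φ.Realize ![a, z i] ↔ s i = true)

/-- `c` and `c'` have the same Δ-type over `A`, where
`Δ(y; z₀, …, z_{n-1}) = {∃x (φ(x;y)^t ∧ ⋀_i φ(x;z_i)^(s i)) : t < 2, s ∈ 2^n}`. -/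
def SameDeltaType (φ : L.Formula (Fin 2)) (n : ℕ) (c c' : M) (A : Set M) : Prop :=
  ∀ (t : Bool) (s : Fin n → Bool) (z : Fin n → M), (∀ i, z i ∈ A) →
    (DeltaHolds L M φ t s z c ↔ DeltaHolds L M φ t s z c')

/-- The signed instances `{φ(x; c i t)^t : i < K, t < 2}` of a configuration. -/
def configSet {K : ℕ} (c : Fin K → Bool → M) : Set (M × Bool) :=
  {q | ∃ i t, q = (c i t, t)}

/-- The underlying set of elements of a configuration. -/
def cSet {K : ℕ} (c : Fin K → Bool → M) : Set M := {x | ∃ i t, x = c i t}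

/-- A good configuration of the φ-type `p` over `B` of size `K`. -/
def GoodConfig (φ : L.Formula (Fin 2)) (n : ℕ) (Θ : Set (L.Formula Unit)) (B : Set M)
    (p : M → Bool) (K : ℕ) (c : Fin K → Bool → M) : Prop :=
  (∀ i t, RealizesTheta L M Θ (c i t)) ∧
  Consistent L M φ (typeSet M B p ∪ configSet M c) ∧
  ∀ (s : Fin K → Bool) (j : Fin K),
    SameDeltaType L M φ n (c j false) (c j true)
      (B ∪ {x | ∃ i, i ≠ j ∧ x = c i (s i)})

/-- The Δ-type of `d` over `A` is finitely satisfiable in `B`. -/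
def DeltaTypeFinSat (φ : L.Formula (Fin 2)) (n : ℕ) (d : M) (A B : Set M) : Prop :=
  ∀ F : Finset (Bool × (Fin n → Bool) × (Fin n → M)),
    (∀ q ∈ F, ∀ i, q.2.2 i ∈ A) →
    ∃ b ∈ B, ∀ q ∈ F,
      (DeltaHolds L M φ q.1 q.2.1 q.2.2 d ↔ DeltaHolds L M φ q.1 q.2.1 q.2.2 b)

/-!
If `K > n`, keep `n + 1` indices of the configuration. A realization `a` of
`{φ(x; c_{i,t})^t}` realizes any sign pattern `s` on the parameters `c_{i,s(i)}`. Changing one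
parameter `c_{j,1}` to `c_{j,0}` keeps the pattern realizable: the existence of a witness is a
Δ-formula in `c_{j,1}` over the other `n` current parameters, and `c_{j,0}` has the same Δ-type
over them. After `n + 1` such changes every sign pattern is realized on `{c_{i,0} : i ≤ n}`, a
φ-independent set of size `n + 1`.
-/

section

variable {L M}

def signedFormula (φ : L.Formula (Fin 2)) (t : Bool) : L.Formula (Fin 2) :=
  cond t φ φ.not

@[simp]
lemma realize_signedFormula (φ : L.Formula (Fin 2)) (t : Bool) (v : Fin 2 → M) :
    (signedFormula φ t).Realize v ↔ (φ.Realize v ↔ t = true) := by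
  cases t <;> simp [signedFormula]

/-- The Δ-formula `∃x (φ(x;y)^t ∧ ⋀_i φ(x;z_i)^(s i))`, with `y` the variable `none` and `z_i`
the variable `some i`. -/
noncomputable def deltaFormula (φ : L.Formula (Fin 2)) {n : ℕ} (t : Bool) (s : Fin n → Bool) :
    L.Formula (Option (Fin n)) :=
  Language.Formula.iExs Unit
    ((signedFormula φ t).relabel ![Sum.inr (), Sum.inl none] ⊓
      Language.Formula.iInf fun i =>
        (signedFormula φ (s i)).relabel ![Sum.inr (), Sum.inl (some i)])

lemma realize_deltaFormula (φ : L.Formula (Fin 2)) {n : ℕ} (t : Bool) (s : Fin n → Bool)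
    (z : Fin n → M) (c : M) :
    (deltaFormula φ t s).Realize (fun o => o.elim c z) ↔ DeltaHolds L M φ t s z c := by
  have hcomp : ∀ (x : Unit → M) (o : Option (Fin n)),
      Sum.elim (fun o => o.elim c z) x ∘ ![Sum.inr (), Sum.inl o] = ![x (), o.elim c z] := by
    intro x o; ext k; fin_cases k <;> rfl
  simp only [deltaFormula, DeltaHolds, Language.Formula.realize_iExs, Language.Formula.realize_inf,
    Language.Formula.realize_iInf, Language.Formula.realize_relabel, hcomp, realize_signedFormula,
    Option.elim_none, Option.elim_some]
  exact ⟨fun ⟨x, hx⟩ => ⟨x (), hx⟩, fun ⟨a, ha⟩ => ⟨fun _ => a, ha⟩⟩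

lemma deltaHolds_map {N : Type u'} [L.Structure N] (f : M ↪ₑ[L] N) (φ : L.Formula (Fin 2))
    {n : ℕ} (t : Bool) (s : Fin n → Bool) (z : Fin n → M) (c : M) :
    DeltaHolds L N φ t s (f ∘ z) (f c) ↔ DeltaHolds L M φ t s z c := by
  have hv : (f ∘ fun o : Option (Fin n) => o.elim c z) = fun o => o.elim (f c) (f ∘ z) := by
    ext o; cases o <;> rfl
  rw [← realize_deltaFormula, ← realize_deltaFormula, ← hv, f.map_formula]

lemma SameDeltaType.map {N : Type u'} [L.Structure N] (f : M ↪ₑ[L] N) {φ : L.Formula (Fin 2)}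
    {n : ℕ} {c c' : M} {A : Set M} (h : SameDeltaType L M φ n c c' A) :
    SameDeltaType L N φ n (f c) (f c') (f '' A) := by
  intro t s z hz
  choose w hwA hw using hz
  obtain rfl : f ∘ w = z := funext hw
  rw [deltaHolds_map, deltaHolds_map]
  exact h t s w hwA

lemma SameDeltaType.mono {φ : L.Formula (Fin 2)} {n : ℕ} {c c' : M} {A A' : Set M}
    (h : SameDeltaType L M φ n c c' A') (hA : A ⊆ A') : SameDeltaType L M φ n c c' A :=
  fun t s z hz => h t s z fun i => hA (hz i)

def SignRealizable {ι : Type*} (φ : L.Formula (Fin 2)) (y : ι → M) (s : ι → Bool) : Prop :=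
  ∃ a : M, ∀ i, φ.Realize ![a, y i] ↔ s i = true

lemma injective_of_forall_signRealizable {ι : Type*} {φ : L.Formula (Fin 2)} {y : ι → M}
    (hy : ∀ s, SignRealizable φ y s) : Function.Injective y := by
  classical
  intro i i' hii'
  obtain ⟨a, ha⟩ := hy fun k => decide (k = i)
  exact (decide_eq_true_iff.1 ((ha i').1 (hii' ▸ (ha i).2 (decide_eq_true rfl)))).symm

lemma phiIndep_range_of_forall_signRealizable {N : MT L M} {ι : Type*} {φ : L.Formula (Fin 2)}
    {y : ι → N} (hy : ∀ s, SignRealizable φ y s) : PhiIndep L N φ (Set.range y) := by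
  intro σ
  obtain ⟨a, ha⟩ := hy (σ ∘ y)
  refine ⟨.of _ N, Language.ElementaryEmbedding.refl L N, a, ?_⟩
  rintro q ⟨⟨i, hi⟩, hq⟩
  rw [← hq, ← hi]
  exact ha i

lemma HasID.le_of_forall_signRealizable {φ : L.Formula (Fin 2)} {n : ℕ} (hID : HasID L M φ n)
    (N : MT L M) (f : M ↪ₑ[L] N) {k : ℕ} {y : Fin k → N} (hy : ∀ s, SignRealizable φ y s) :
    k ≤ n := by
  have hcard := (hID.2 N f _ (phiIndep_range_of_forall_signRealizable hy)).2
  rwa [Set.ncard_range_of_injective (injective_of_forall_signRealizable hy), Nat.card_fin] at hcard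

section Swap

variable {φ : L.Formula (Fin 2)} {n : ℕ} {c : Fin (n + 1) → Bool → M}

lemma SignRealizable.update_false
    (hswap : ∀ (u : Fin (n + 1) → Bool) j,
      SameDeltaType L M φ n (c j false) (c j true) {x | ∃ i, i ≠ j ∧ x = c i (u i)})
    {u s : Fin (n + 1) → Bool} (h : SignRealizable φ (fun i => c i (u i)) s) (j : Fin (n + 1)) :
    SignRealizable φ (fun i => c i (Function.update u j false i)) s := by
  cases hu : u j with
  | false => rwa [Function.update_eq_self_iff.2 hu.symm]
  | true =>
    obtain ⟨a, ha⟩ := h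
    have hz : ∀ i, c (j.succAbove i) (u (j.succAbove i)) ∈ {x | ∃ i, i ≠ j ∧ x = c i (u i)} :=
      fun i => ⟨_, j.succAbove_ne i, rfl⟩
    have haj := ha j
    simp only [hu] at haj
    obtain ⟨a', ha'j, ha'⟩ := (hswap u j (s j) (s ∘ j.succAbove) _ hz).2 ⟨a, haj, fun i => ha _⟩
    refine ⟨a', fun i => ?_⟩
    rcases eq_or_ne i j with rfl | hij
    · simpa using ha'j
    · obtain ⟨i, rfl⟩ := Fin.exists_succAbove_eq hij
      simpa [Function.update_of_ne hij] using ha' i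

lemma forall_signRealizable_of_sameDeltaType
    (hswap : ∀ (u : Fin (n + 1) → Bool) j,
      SameDeltaType L M φ n (c j false) (c j true) {x | ∃ i, i ≠ j ∧ x = c i (u i)})
    {a : M} (ha : ∀ i t, φ.Realize ![a, c i t] ↔ t = true) (s : Fin (n + 1) → Bool) :
    SignRealizable φ (fun i => c i false) s := by
  have hT : ∀ T : Finset (Fin (n + 1)), SignRealizable φ (fun i => c i (s i && i ∉ T)) s := by
    intro T
    induction T using Finset.induction_on with
    | empty => simpa using ⟨a, fun i => ha i (s i)⟩
    | insert j T _ ih =>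
      convert SignRealizable.update_false hswap ih j using 4 with i
      by_cases hij : i = j <;> simp [hij]
  simpa using hT Finset.univ

end Swap

end

theorem goodConfig_size_le_ID (φ : L.Formula (Fin 2)) (n : ℕ) (hID : HasID L M φ n)
    (Θ : Set (L.Formula Unit)) (B : Set M) (p : M → Bool)
    (K : ℕ) (c : Fin K → Bool → M) (hc : GoodConfig L M φ n Θ B p K c) :
    K ≤ n := by
  by_contra! hK
  obtain ⟨-, ⟨N, f, a, ha⟩, hsame⟩ := hc
  let ι : Fin (n + 1) ↪ Fin K := Fin.castLEEmb hK
  let d : Fin (n + 1) → Bool → N := fun i t => f (c (ι i) t)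
  have hd : ∀ i t, φ.Realize ![a, d i t] ↔ t = true := fun i t => ha _ (Or.inr ⟨ι i, t, rfl⟩)
  have hswap : ∀ (u : Fin (n + 1) → Bool) j,
      SameDeltaType L N φ n (d j false) (d j true) {x | ∃ i, i ≠ j ∧ x = d i (u i)} := by
    intro u j
    refine ((hsame (Function.extend ι u fun _ => false) (ι j)).map f).mono ?_
    rintro _ ⟨i, hij, rfl⟩
    exact ⟨_, Or.inr ⟨ι i, ι.injective.ne hij, by rw [ι.injective.extend_apply]⟩, rfl⟩
  exact Nat.not_succ_le_self n
    (hID.le_of_forall_signRealizable N f (forall_signRealizable_of_sameDeltaType hswap hd))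

end IET
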